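/- (Equivalence Dirichlet → Robin.) Assume α₂ > α₃ and A > B. Let μ₁ > z₀ be the unique solution of the reduced Dirichlet system, i.e. Q(μ₁) = V(μ₂) where μ₂ ≥ 0 satisfies erf(μ₂·√(α₁/α₂)) = H(μ₁). Let A∞ > A be such that (A−B)/((A∞−A)·erf(μ₂·√(α₁/α₃))) > ((B−C)/(A∞−B))·√(k₂·c₂/(k₃·c₃))·(1/erf(z₀·√(α₁/α₂))), and define h₀ := (k₃/√(α₃·π))·(A−B)/((A∞−A)·erf(μ₂·√(α₁/α₃))). Then h₀ > h₂ and Q(μ₁) = T(μ₂), where T is the Robin function built from these h₀ and A∞; consequently μ₁ coincides with the unique solution ξ₁ > z₀ of the reduced Robin system with data h₀, A∞, and μ₂ = ξ₂. -/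

import Mathlib

noncomputable section

/-- The error function `erf x = (2/√π) ∫₀ˣ exp(−s²) ds`. -/
def erf (x : ℝ) : ℝ := (2 / Real.sqrt Real.pi) * ∫ s in (0:ℝ)..x, Real.exp (-(s^2))

/-- The complementary error function. -/
def erfc (x : ℝ) : ℝ := 1 - erf x

/-- Physical data of the three-phase Stefan problem: positive thermal conductivities,
specific heats, mass density, latent heats, and temperatures `B > C > D`. -/
structure Params where
  k₁ : ℝ
  k₂ : ℝ
  k₃ : ℝ
  c₁ : ℝ
  c₂ : ℝ
  c₃ : ℝ
  ρ : ℝ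
  ℓ₁ : ℝ
  ℓ₂ : ℝ
  B : ℝ
  C : ℝ
  D : ℝ
  hk₁ : 0 < k₁
  hk₂ : 0 < k₂
  hk₃ : 0 < k₃
  hc₁ : 0 < c₁
  hc₂ : 0 < c₂
  hc₃ : 0 < c₃
  hρ : 0 < ρ
  hℓ₁ : 0 < ℓ₁
  hℓ₂ : 0 < ℓ₂
  hBC : C < B
  hCD : D < C

namespace Params

/-- Thermal diffusivity of phase 1. -/
def α₁ (p : Params) : ℝ := p.k₁ / (p.ρ * p.c₁)

/-- Thermal diffusivity of phase 2. -/
def α₂ (p : Params) : ℝ := p.k₂ / (p.ρ * p.c₂)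

/-- Thermal diffusivity of phase 3. -/
def α₃ (p : Params) : ℝ := p.k₃ / (p.ρ * p.c₃)

/-- Stefan number `Ste₁ = c₁(C−D)/ℓ₁`. -/
def Ste₁ (p : Params) : ℝ := p.c₁ * (p.C - p.D) / p.ℓ₁

/-- Stefan number `Ste₂ = c₂(B−C)/ℓ₂`. -/
def Ste₂ (p : Params) : ℝ := p.c₂ * (p.B - p.C) / p.ℓ₂

/-- `φ(z) = z + (Ste₁/√π) exp(−z²)/erfc(z)`. -/
def φ (p : Params) (z : ℝ) : ℝ :=
  z + (p.Ste₁ / Real.sqrt Real.pi) * Real.exp (-(z^2)) / erfc z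

/-- `H(z) = erf(z√(α₁/α₂)) − (Ste₂/√π)(ℓ₂/ℓ₁)√(k₂c₁/(k₁c₂)) exp(−z²α₁/α₂)/φ(z)`. -/
def H (p : Params) (z : ℝ) : ℝ :=
  erf (z * Real.sqrt (p.α₁ / p.α₂)) -
    (p.Ste₂ / Real.sqrt Real.pi) * (p.ℓ₂ / p.ℓ₁) *
      Real.sqrt (p.k₂ * p.c₁ / (p.k₁ * p.c₂)) *
      (Real.exp (-(z^2) * (p.α₁ / p.α₂)) / p.φ z)

/-- `Q(z) = (ℓ₁/ℓ₂) φ(z) exp(z² α₁/α₂)`. -/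
def Q (p : Params) (z : ℝ) : ℝ :=
  (p.ℓ₁ / p.ℓ₂) * p.φ z * Real.exp (z^2 * (p.α₁ / p.α₂))

/-- The function `T` arising from the Robin (convective) boundary condition with
heat-transfer coefficient `h₀` and bulk temperature `Ainf`. -/
def T (p : Params) (h₀ Ainf : ℝ) (z : ℝ) : ℝ :=
  (p.Ste₂ / (Real.sqrt Real.pi * p.c₂)) * ((Ainf - p.B) / (p.B - p.C)) *
    Real.sqrt (p.k₃ * p.c₁ * p.c₃ / p.k₁) *
    (Real.exp (-(z^2) * p.α₁ * (1 / p.α₃ - 1 / p.α₂)) /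
      (p.k₃ / (h₀ * Real.sqrt (Real.pi * p.α₃)) + erf (z * Real.sqrt (p.α₁ / p.α₃)))) -
  z * Real.exp (z^2 * (p.α₁ / p.α₂))

/-- The function `V` arising from the Dirichlet boundary condition with temperature `A`. -/
def V (p : Params) (A : ℝ) (z : ℝ) : ℝ :=
  ((A - p.B) / p.ℓ₂) * Real.sqrt (p.c₁ * p.c₃ * p.k₃ / (Real.pi * p.k₁)) *
    (Real.exp (-(z^2) * (p.α₁ / p.α₃ - p.α₁ / p.α₂)) / erf (z * Real.sqrt (p.α₁ / p.α₃))) -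
  z * Real.exp (z^2 * (p.α₁ / p.α₂))

/-- The function `P` arising from the Neumann boundary condition with flux coefficient `q₀`. -/
def P (p : Params) (q₀ : ℝ) (z : ℝ) : ℝ :=
  Real.exp (z^2 * (p.α₁ / p.α₂)) *
    (-z + (q₀ / p.ℓ₂) * Real.sqrt (p.c₁ / (p.ρ * p.k₁)) * Real.exp (-(z^2) * (p.α₁ / p.α₃)))

/-- Critical heat-transfer coefficient `h₂`. -/
def h2 (p : Params) (Ainf z₀ : ℝ) : ℝ :=
  ((p.B - p.C) / (Ainf - p.B)) *
    Real.sqrt (p.k₂ * p.k₃ * p.c₂ / (Real.pi * p.c₃ * p.α₃)) *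
    (1 / erf (z₀ * Real.sqrt (p.α₁ / p.α₂)))

/-- Critical heat-flux coefficient `q₂`. -/
def q2 (p : Params) (z₀ : ℝ) : ℝ :=
  p.k₂ * (p.B - p.C) / (Real.sqrt (p.α₂ * Real.pi) * erf (z₀ * Real.sqrt (p.α₁ / p.α₂)))

end Params

/-! The coefficient `h₀` is chosen so that
`k₃ / (h₀ √(π α₃)) + erf (μ₂ √(α₁/α₃)) = erf (μ₂ √(α₁/α₃)) (A∞ - B) / (A - B)`,
which turns `T (μ₂)` into `V (μ₂)`, so `(μ₁, μ₂)` solves the Robin system; multiplying the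
hypothesis on `A∞` by `k₃ / √(α₃ π)` gives `h₂ < h₀`. For uniqueness, `H` and `Q` increase
strictly on `[0, ∞)` (because the Mills-type ratio `exp (-z²) / erfc z` is nondecreasing),
`erf` increases and, as `α₃ < α₂`, `T` decreases strictly. Hence for two solutions
`ξ₁ < μ₁ ↔ ξ₂ < μ₂ ↔ μ₁ < ξ₁`, which forces equality. -/

open MeasureTheory Set Real

lemma integrable_exp_neg_sq : Integrable fun s : ℝ => exp (-s ^ 2) := by
  simpa using integrable_exp_neg_mul_sq one_pos

lemma erf_zero : erf 0 = 0 := by simp [erf]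

lemma erf_strictMono : StrictMono erf := by
  intro x y hxy
  have hi : ∀ a b : ℝ, IntervalIntegrable (fun s => exp (-s ^ 2)) volume a b :=
    fun a b => integrable_exp_neg_sq.intervalIntegrable
  have hpos : 0 < ∫ s in x..y, exp (-s ^ 2) :=
    intervalIntegral.intervalIntegral_pos_of_pos (hi x y) (fun s => exp_pos _) hxy
  rw [erf, erf, ← intervalIntegral.integral_add_adjacent_intervals (hi 0 x) (hi x y)]
  gcongr
  linarith

lemma erf_pos_iff {x : ℝ} : 0 < erf x ↔ 0 < x := by
  conv_lhs => rw [← erf_zero]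
  exact erf_strictMono.lt_iff_lt

lemma erf_nonneg {x : ℝ} (hx : 0 ≤ x) : 0 ≤ erf x := erf_zero ▸ erf_strictMono.monotone hx

lemma erfc_eq_integral_Ioi (x : ℝ) : erfc x = 2 / √π * ∫ s in Ioi x, exp (-s ^ 2) := by
  have hsplit := intervalIntegral.integral_interval_add_Ioi (a := 0) (b := x)
    integrable_exp_neg_sq.integrableOn integrable_exp_neg_sq.integrableOn
  have hhalf : ∫ s in Ioi (0 : ℝ), exp (-s ^ 2) = √π / 2 := by
    simpa using integral_gaussian_Ioi 1
  have hinit : ∫ s in (0 : ℝ)..x, exp (-s ^ 2) = √π / 2 - ∫ s in Ioi x, exp (-s ^ 2) := by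
    linarith
  rw [erfc, erf, hinit]
  field_simp
  ring

lemma integral_Ioi_exp_neg_sq_pos (x : ℝ) : 0 < ∫ s in Ioi x, exp (-s ^ 2) := by
  have : NeZero (volume (Ioi x)) := ⟨by simp⟩
  exact integral_exp_pos integrable_exp_neg_sq.integrableOn

lemma erfc_pos (x : ℝ) : 0 < erfc x := by
  rw [erfc_eq_integral_Ioi]
  have := integral_Ioi_exp_neg_sq_pos x
  positivity

/-- Substituting `s = x + t` gives `exp (x²) ∫ₓ^∞ exp (-s²) ds = ∫₀^∞ exp (-2xt - t²) dt`. -/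
lemma antitone_exp_sq_mul_integral_Ioi :
    Antitone fun x : ℝ => exp (x ^ 2) * ∫ s in Ioi x, exp (-s ^ 2) := by
  intro x y hxy
  have hshift : ∫ s in Ioi y, exp (-s ^ 2) = ∫ u in Ioi x, exp (-(u + (y - x)) ^ 2) := by
    have hpre : (· + (y - x)) ⁻¹' Ioi y = Ioi x := by ext u; simp
    rw [← (measurePreserving_add_right volume (y - x)).setIntegral_preimage_emb
      (measurableEmbedding_addRight _), hpre]
  dsimp only
  rw [hshift, ← integral_const_mul, ← integral_const_mul]
  refine setIntegral_mono_on ?_ ?_ measurableSet_Ioi fun u hu => ?_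
  · exact ((integrable_exp_neg_sq.comp_add_right _).const_mul _).integrableOn
  · exact (integrable_exp_neg_sq.const_mul _).integrableOn
  · rw [← exp_add, ← exp_add, exp_le_exp]
    nlinarith [mem_Ioi.1 hu]

lemma monotone_exp_neg_sq_div_erfc : Monotone fun x : ℝ => exp (-x ^ 2) / erfc x := by
  intro x y hxy
  have hratio (z : ℝ) :
      exp (-z ^ 2) / erfc z = √π / 2 / (exp (z ^ 2) * ∫ s in Ioi z, exp (-s ^ 2)) := by
    rw [erfc_eq_integral_Ioi, exp_neg]
    have := integral_Ioi_exp_neg_sq_pos z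
    field_simp
  simp only [hratio]
  have := integral_Ioi_exp_neg_sq_pos y
  exact div_le_div_of_nonneg_left (by positivity) (by positivity)
    (antitone_exp_sq_mul_integral_Ioi hxy)

theorem eq_and_eq_of_strictMonoOn_strictAntiOn {α β γ δ : Type*} [LinearOrder α] [LinearOrder β]
    [LinearOrder γ] [LinearOrder δ] {s : Set α} {t : Set β} {f : α → γ} {g : β → γ}
    {q : α → δ} {r : β → δ} (hf : StrictMonoOn f s) (hg : StrictMonoOn g t)
    (hq : StrictMonoOn q s) (hr : StrictAntiOn r t) {x x' : α} {y y' : β}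
    (hx : x ∈ s) (hx' : x' ∈ s) (hy : y ∈ t) (hy' : y' ∈ t)
    (hgf : g y = f x) (hgf' : g y' = f x') (hqr : q x = r y) (hqr' : q x' = r y') :
    x = x' ∧ y = y' := by
  have hlt : x < x' ↔ x' < x := by
    rw [← hf.lt_iff_lt hx hx', ← hgf, ← hgf', hg.lt_iff_lt hy hy', ← hr.lt_iff_gt hy' hy,
      ← hqr, ← hqr', hq.lt_iff_lt hx' hx]
  have hxx' : x = x' := by
    by_contra hne
    rcases lt_or_gt_of_ne hne with h | h
    · exact lt_asymm h (hlt.1 h)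
    · exact lt_asymm h (hlt.2 h)
  exact ⟨hxx', hg.injOn hy hy' (by rw [hgf, hgf', hxx'])⟩

namespace Params

variable (p : Params)

lemma α₁_pos : 0 < p.α₁ := div_pos p.hk₁ (mul_pos p.hρ p.hc₁)

lemma α₂_pos : 0 < p.α₂ := div_pos p.hk₂ (mul_pos p.hρ p.hc₂)

lemma α₃_pos : 0 < p.α₃ := div_pos p.hk₃ (mul_pos p.hρ p.hc₃)

lemma Ste₁_pos : 0 < p.Ste₁ := div_pos (mul_pos p.hc₁ (sub_pos.2 p.hCD)) p.hℓ₁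

lemma Ste₂_pos : 0 < p.Ste₂ := div_pos (mul_pos p.hc₂ (sub_pos.2 p.hBC)) p.hℓ₂

lemma φ_strictMono : StrictMono p.φ := by
  intro x y hxy
  have hratio := monotone_exp_neg_sq_div_erfc hxy.le
  have := p.Ste₁_pos
  simp only [φ, mul_div_assoc]
  exact add_lt_add_of_lt_of_le hxy (mul_le_mul_of_nonneg_left hratio (by positivity))

lemma φ_pos {z : ℝ} (hz : 0 ≤ z) : 0 < p.φ z := by
  have := p.Ste₁_pos
  have := erfc_pos z
  unfold φ
  positivity

lemma Q_strictMonoOn : StrictMonoOn p.Q (Ici 0) := by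
  intro x hx y hy hxy
  have := p.φ_pos hx
  have := p.φ_strictMono hxy
  have := div_pos p.hℓ₁ p.hℓ₂
  have := p.α₁_pos
  have := p.α₂_pos
  unfold Q
  gcongr

lemma H_strictMonoOn : StrictMonoOn p.H (Ici 0) := by
  intro x hx y hy hxy
  have := p.φ_pos hx
  have := (p.φ_strictMono hxy).le
  have := p.Ste₂_pos
  have := p.hℓ₁
  have := p.hℓ₂
  have := div_pos p.α₁_pos p.α₂_pos
  have hs := sqrt_pos.2 this
  unfold H
  refine (sub_lt_sub_right (erf_strictMono (by gcongr)) _).trans_le (sub_le_sub_left ?_ _)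
  gcongr

lemma T_strictAntiOn {h₀ Ainf : ℝ} (hh₀ : 0 < h₀) (hAinf : p.B ≤ Ainf) (hα : p.α₃ < p.α₂) :
    StrictAntiOn (p.T h₀ Ainf) (Ici 0) := by
  intro x hx y hy hxy
  have := p.Ste₂_pos
  have := p.hc₂
  have := sub_pos.2 p.hBC
  have := p.hk₃
  have := p.α₁_pos
  have := p.α₂_pos
  have := p.α₃_pos
  have hb : 1 / p.α₂ < 1 / p.α₃ := one_div_lt_one_div_of_lt p.α₃_pos hα
  have hs := sqrt_pos.2 (div_pos p.α₁_pos p.α₃_pos)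
  have := erf_nonneg (mul_nonneg (mem_Ici.1 hx) hs.le)
  have := erf_strictMono.monotone (mul_le_mul_of_nonneg_right hxy.le hs.le)
  unfold T
  refine (sub_le_sub_right ?_ _).trans_lt (sub_lt_sub_left ?_ _)
  · gcongr
  · gcongr

lemma h2_eq (Ainf z₀ : ℝ) :
    p.h2 Ainf z₀ = p.k₃ / √(p.α₃ * π) * ((p.B - p.C) / (Ainf - p.B) *
      √(p.k₂ * p.c₂ / (p.k₃ * p.c₃)) * (1 / erf (z₀ * √(p.α₁ / p.α₂)))) := by
  have hsplit : p.k₂ * p.k₃ * p.c₂ / (π * p.c₃ * p.α₃)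
      = p.k₃ ^ 2 / (p.α₃ * π) * (p.k₂ * p.c₂ / (p.k₃ * p.c₃)) := by
    field_simp [p.hk₃.ne', p.hc₃.ne', p.α₃_pos.ne', pi_ne_zero]
  rw [h2, hsplit, sqrt_mul (div_nonneg (sq_nonneg _) (mul_pos p.α₃_pos pi_pos).le),
    sqrt_div (sq_nonneg _), sqrt_sq p.hk₃.le]
  ring

lemma T_eq_V {A Ainf h₀ z : ℝ} (hA : p.B < A) (hAinf : A < Ainf) (hz : 0 < z)
    (hh₀ : h₀ = p.k₃ / √(p.α₃ * π) *
      ((A - p.B) / ((Ainf - A) * erf (z * √(p.α₁ / p.α₃))))) :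
    p.T h₀ Ainf z = p.V A z := by
  rw [T, V]
  set E := erf (z * √(p.α₁ / p.α₃))
  have hE : 0 < E := erf_pos_iff.2 (mul_pos hz (sqrt_pos.2 (div_pos p.α₁_pos p.α₃_pos)))
  have hexp : -z ^ 2 * p.α₁ * (1 / p.α₃ - 1 / p.α₂) = -z ^ 2 * (p.α₁ / p.α₃ - p.α₁ / p.α₂) := by
    ring
  have hsqrt : √(p.k₃ * p.c₁ * p.c₃ / p.k₁) = √π * √(p.c₁ * p.c₃ * p.k₃ / (π * p.k₁)) := by
    rw [← sqrt_mul pi_pos.le]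
    congr 1
    field_simp [p.hk₁.ne', pi_ne_zero]
  have hrobin : p.k₃ / (h₀ * √(π * p.α₃)) + E = E * (Ainf - p.B) / (A - p.B) := by
    rw [hh₀, mul_comm π]
    have := sqrt_pos.2 (mul_pos p.α₃_pos pi_pos)
    have := p.hk₃
    field_simp [(sub_pos.2 hA).ne', (sub_pos.2 hAinf).ne']
    ring
  have := p.hc₂
  have := p.hℓ₂
  have := sqrt_pos.2 pi_pos
  rw [hexp, hsqrt, hrobin, Ste₂]
  field_simp [(sub_pos.2 hA).ne', (sub_pos.2 (hA.trans hAinf)).ne', (sub_pos.2 p.hBC).ne']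

end Params

theorem dirichlet_to_robin_general (p : Params) (A Ainf z₀ μ₁ μ₂ h₀ : ℝ)
    (hα : p.α₃ < p.α₂) (hA : p.B < A)
    (hz₀ : 0 < z₀ ∧ p.H z₀ = 0)
    (hμ₁ : z₀ < μ₁)
    (herf : erf (μ₂ * Real.sqrt (p.α₁ / p.α₂)) = p.H μ₁)
    (hsys : p.Q μ₁ = p.V A μ₂)
    (hAinf : A < Ainf)
    (hcond : (A - p.B) / ((Ainf - A) * erf (μ₂ * Real.sqrt (p.α₁ / p.α₃))) >
      ((p.B - p.C) / (Ainf - p.B)) * Real.sqrt (p.k₂ * p.c₂ / (p.k₃ * p.c₃)) *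
        (1 / erf (z₀ * Real.sqrt (p.α₁ / p.α₂))))
    (hh₀ : h₀ = (p.k₃ / Real.sqrt (p.α₃ * Real.pi)) *
      ((A - p.B) / ((Ainf - A) * erf (μ₂ * Real.sqrt (p.α₁ / p.α₃))))) :
    p.h2 Ainf z₀ < h₀ ∧ p.Q μ₁ = p.T h₀ Ainf μ₂ ∧
    ∀ ξ₁ ξ₂ : ℝ, z₀ < ξ₁ → 0 ≤ ξ₂ →
      erf (ξ₂ * Real.sqrt (p.α₁ / p.α₂)) = p.H ξ₁ →
      p.Q ξ₁ = p.T h₀ Ainf ξ₂ → ξ₁ = μ₁ ∧ ξ₂ = μ₂ := by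
  obtain ⟨hz₀, -⟩ := hz₀
  have hcoeff : 0 < p.k₃ / √(p.α₃ * π) := div_pos p.hk₃ (sqrt_pos.2 (mul_pos p.α₃_pos pi_pos))
  have hcrit : 0 < (p.B - p.C) / (Ainf - p.B) * √(p.k₂ * p.c₂ / (p.k₃ * p.c₃)) *
      (1 / erf (z₀ * √(p.α₁ / p.α₂))) := by
    have := sub_pos.2 p.hBC
    have := sub_pos.2 (hA.trans hAinf)
    have := sqrt_pos.2 (div_pos (mul_pos p.hk₂ p.hc₂) (mul_pos p.hk₃ p.hc₃))
    have := erf_pos_iff.2 (mul_pos hz₀ (sqrt_pos.2 (div_pos p.α₁_pos p.α₂_pos)))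
    positivity
  have hμ₂ : 0 < μ₂ := by
    have hE := pos_of_mul_pos_right ((div_pos_iff_of_pos_left (sub_pos.2 hA)).1 (hcrit.trans hcond))
      (sub_pos.2 hAinf).le
    exact pos_of_mul_pos_left (erf_pos_iff.1 hE) (sqrt_nonneg _)
  have hQT : p.Q μ₁ = p.T h₀ Ainf μ₂ := hsys.trans (p.T_eq_V hA hAinf hμ₂ hh₀).symm
  refine ⟨p.h2_eq Ainf z₀ ▸ hh₀ ▸ mul_lt_mul_of_pos_left hcond hcoeff, hQT,
    fun ξ₁ ξ₂ hξ₁ hξ₂ herfξ hQTξ => ?_⟩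
  have hh₀_pos : 0 < h₀ := hh₀ ▸ mul_pos hcoeff (hcrit.trans hcond)
  have hs : StrictMono fun z => erf (z * √(p.α₁ / p.α₂)) :=
    erf_strictMono.comp (strictMono_mul_right_of_pos (sqrt_pos.2 (div_pos p.α₁_pos p.α₂_pos)))
  exact eq_and_eq_of_strictMonoOn_strictAntiOn p.H_strictMonoOn (hs.strictMonoOn (Ici 0))
    p.Q_strictMonoOn (p.T_strictAntiOn hh₀_pos (hA.trans hAinf).le hα)
    (hz₀.trans hξ₁).le (hz₀.trans hμ₁).le hξ₂ hμ₂.le herfξ herf hQTξ hQT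

/-- Equivalence Dirichlet → Robin. -/
theorem dirichlet_to_robin (p : Params) (A Ainf z₀ μ₁ μ₂ h₀ : ℝ)
    (hα : p.α₃ < p.α₂) (hA : p.B < A)
    (hz₀ : 0 < z₀ ∧ p.H z₀ = 0)
    (hμ₁ : z₀ < μ₁) (hμ₂ : 0 ≤ μ₂)
    (herf : erf (μ₂ * Real.sqrt (p.α₁ / p.α₂)) = p.H μ₁)
    (hsys : p.Q μ₁ = p.V A μ₂)
    (hAinf : A < Ainf)
    (hcond : (A - p.B) / ((Ainf - A) * erf (μ₂ * Real.sqrt (p.α₁ / p.α₃))) >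
      ((p.B - p.C) / (Ainf - p.B)) * Real.sqrt (p.k₂ * p.c₂ / (p.k₃ * p.c₃)) *
        (1 / erf (z₀ * Real.sqrt (p.α₁ / p.α₂))))
    (hh₀ : h₀ = (p.k₃ / Real.sqrt (p.α₃ * Real.pi)) *
      ((A - p.B) / ((Ainf - A) * erf (μ₂ * Real.sqrt (p.α₁ / p.α₃))))) :
    p.h2 Ainf z₀ < h₀ ∧ p.Q μ₁ = p.T h₀ Ainf μ₂ ∧
    ∀ ξ₁ ξ₂ : ℝ, z₀ < ξ₁ → 0 ≤ ξ₂ →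
      erf (ξ₂ * Real.sqrt (p.α₁ / p.α₂)) = p.H ξ₁ →
      p.Q ξ₁ = p.T h₀ Ainf ξ₂ → ξ₁ = μ₁ ∧ ξ₂ = μ₂ :=
  dirichlet_to_robin_general p A Ainf z₀ μ₁ μ₂ h₀ hα hA hz₀ hμ₁ herf hsys hAinf hcond hh₀
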